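/- Let 𝒜 be a linear order with no maximum and 𝒰 a tails ultrafilter over ⟨A, <⟩. Then cof(𝒜) < cof(A^A/𝒰). Consequently, if moreover |A| = cof(𝒜), then |A| < |A^A/𝒰|. -/

import Mathlib

/-!
Let `λ = cof A` and enumerate a cofinal subset of `A` as `e : λ.ord.ToType → A`. Given at most
`λ` functions `fᵢ : A → A`, indexed injectively by ordinals `j i < λ`, call `i` active at `a` when
`a` dominates `e` on `Iic (j i)`. Each index is active on a tail, and the indices active at `a`
sit below some `ζ` with `a < e ζ`, so there are fewer than `λ` of them; hence the values `fᵢ a`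
of the active indices have a strict upper bound `g a`. The germ of `g` then lies strictly above
every `fᵢ` modulo a tails ultrafilter, so no family of `λ` germs is cofinal in `A^A/𝒰`.
-/

universe u

noncomputable def rcofin {α : Type u} (r : α → α → Prop) : Cardinal.{u} :=
  ⨅ S : {S : Set α // ∀ a : α, ∃ b ∈ S, r a b}, Cardinal.mk S.1

open Cardinal Set Filter Function

theorem rcofin_le_eq_cof (α : Type u) [Preorder α] :
    rcofin ((· ≤ ·) : α → α → Prop) = Order.cof α :=
  rfl

namespace Order

theorem exists_isCofinal_range_ord_toType (α : Type u) [Preorder α] :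
    ∃ e : (cof α).ord.ToType → α, IsCofinal (range e) := by
  obtain ⟨s, hs, hcard⟩ := exists_cof_eq α
  obtain ⟨e⟩ := Cardinal.eq.1 ((mk_ord_toType _).trans hcard.symm)
  exact ⟨(↑) ∘ e, by rwa [range_comp, e.range_eq_univ, image_univ, Subtype.range_coe]⟩

variable {A B : Type u} [LinearOrder A] [LinearOrder B]

theorem exists_forall_lt_of_mk_lt_cof {s : Set A} (hs : #s < cof A) : ∃ b, ∀ x ∈ s, x < b :=
  not_isCofinal_iff.1 fun h => (cof_le h).not_gt hs

theorem exists_eventually_lt_of_mk_le_cof [NoMaxOrder A] {ι : Type u} (f : ι → A → B)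
    (hι : #ι ≤ cof A) (hB : cof A ≤ cof B) :
    ∃ g : A → B, ∀ i, ∀ᶠ a in atTop, f i a < g a := by
  obtain ⟨e, he⟩ := exists_isCofinal_range_ord_toType A
  obtain ⟨⟨j, hj⟩⟩ : Nonempty (ι ↪ (cof A).ord.ToType) := by
    rwa [← mk_ord_toType (cof A), Cardinal.le_def] at hι
  let active (a : A) : Set ι := {i | ∀ ξ ≤ j i, e ξ ≤ a}
  have mk_active_lt (a : A) : #(active a) < cof A := by
    obtain ⟨a', ha'⟩ := exists_gt a
    obtain ⟨_, ⟨ζ, rfl⟩, hζ⟩ := he a'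
    have hsub : active a ⊆ j ⁻¹' Iio ζ := fun i hi =>
      lt_of_not_ge fun hζi => (ha'.trans_le hζ).not_ge (hi ζ hζi)
    calc #(active a) ≤ #(Iio ζ) :=
          (mk_le_mk_of_subset hsub).trans (mk_preimage_of_injective j _ hj)
      _ < cof A := by simpa using mk_Iio_lt ζ
  have eventually_active (i : ι) : ∀ᶠ a in atTop, i ∈ active a := by
    obtain ⟨b, hb⟩ := exists_forall_lt_of_mk_lt_cof (s := e '' Iio (j i))
      (mk_image_le.trans_lt (by simpa using mk_Iio_lt (j i)))
    refine (eventually_ge_atTop (max b (e (j i)))).mono fun a ha ξ hξ => ?_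
    rcases hξ.lt_or_eq with hlt | rfl
    · exact (hb _ (mem_image_of_mem e hlt)).le.trans ((le_max_left _ _).trans ha)
    · exact (le_max_right _ _).trans ha
  choose g hg using fun a =>
    exists_forall_lt_of_mk_lt_cof (s := (f · a) '' active a)
      (mk_image_le.trans_lt ((mk_active_lt a).trans_le hB))
  exact ⟨g, fun i => (eventually_active i).mono fun a ha => hg a _ (mem_image_of_mem _ ha)⟩

theorem cof_lt_cof_germ [NoMaxOrder A] {l : Filter A} [l.NeBot] (hl : l ≤ atTop)
    (hB : cof A ≤ cof B) : cof A < cof (Germ l B) := by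
  by_contra! h
  obtain ⟨S, hS, hSmk⟩ := exists_cof_eq (Germ l B)
  obtain ⟨g, hg⟩ := exists_eventually_lt_of_mk_le_cof (fun s : S => Quotient.out s.1)
    (hSmk.trans_le h) hB
  obtain ⟨s, hs, hgs⟩ := hS (g : Germ l B)
  rw [← Quotient.out_eq s, ← Germ.mk'_eq_coe] at hgs
  obtain ⟨a, hlt, hle⟩ := ((hg ⟨s, hs⟩).filter_mono hl |>.and hgs).exists
  exact (hlt.trans_le hle).false

end Order

/-- If `𝒜` has no maximum and `𝒰` is a tails ultrafilter over `A`, then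
`cof(𝒜) < cof(A^A/𝒰)`; consequently, if `|A| = cof(𝒜)`, then `|A| < |A^A/𝒰|`. -/
theorem stmt13 {A : Type u} [LinearOrder A] [NoMaxOrder A] (U : Ultrafilter A)
    (htails : ∀ k : A, {j : A | k ≤ j} ∈ U) :
    rcofin ((· ≤ ·) : A → A → Prop) <
        rcofin ((· ≤ ·) : Filter.Germ (U : Filter A) A → Filter.Germ (U : Filter A) A → Prop) ∧
      (Cardinal.mk A = rcofin ((· ≤ ·) : A → A → Prop) →
        Cardinal.mk A < Cardinal.mk (Filter.Germ (U : Filter A) A)) := by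
  have : Nonempty A := nonempty_of_neBot (U : Filter A)
  have hU : (U : Filter A) ≤ atTop := atTop_basis.ge_iff.2 fun k _ => htails k
  have hcof := Order.cof_lt_cof_germ (B := A) hU le_rfl
  rw [rcofin_le_eq_cof, rcofin_le_eq_cof]
  exact ⟨hcof, fun hA => hA.trans_lt (hcof.trans_le (Order.cof_le_cardinalMk _))⟩
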